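/- Let Y be a random variable with 0 ≤ Y ≤ M almost surely and Var(Y) > 0. Then the function α ↦ α log E[exp(−Y/α)] is strictly convex on (0, ∞); consequently, for any δ ≥ 0, α ↦ α log E[exp(−Y/α)] + αδ is strictly convex on (0, ∞). -/

import Mathlib

/-!
The second derivative of the cumulant generating function `K` of a random variable `X` at `v`
is the variance of `X` under the law tilted by `exp (v * X)`, which is positive unless `X` is
a.s. constant; hence `K` is strictly convex on the interior of its domain, which is all of `ℝ`
when `X` is bounded. The objective is `α ↦ α * K (α⁻¹)` for `K` the cumulant generating function
of `-Y`, and this perspective transform preserves strict convexity on `(0, ∞)`.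
-/

open MeasureTheory ProbabilityTheory Real Set

namespace ProbabilityTheory

variable {Ω : Type*} {m : MeasurableSpace Ω} {X : Ω → ℝ} {μ : Measure Ω} {v : ℝ}

lemma not_ae_eq_const_of_variance_pos [IsProbabilityMeasure μ] (h : 0 < Var[X; μ]) (c : ℝ) :
    ¬X =ᵐ[μ] fun _ => c := by
  intro hc
  rw [variance_congr hc] at h
  simp [variance, evariance] at h

lemma integrableExpSet_eq_univ_of_mem_Icc [IsFiniteMeasure μ] {a b : ℝ} (hX : AEMeasurable X μ)
    (hb : ∀ᵐ ω ∂μ, X ω ∈ Icc a b) : integrableExpSet X μ = univ :=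
  eq_univ_of_forall fun _ => integrable_exp_mul_of_mem_Icc hX hb

lemma integrable_sq_sub_mul_exp_of_mem_interior_integrableExpSet
    (hv : v ∈ interior (integrableExpSet X μ)) (c : ℝ) :
    Integrable (fun ω => (X ω - c) ^ 2 * exp (v * X ω)) μ := by
  have hexp : v ∈ integrableExpSet X μ := interior_subset hv
  refine (((integrable_pow_mul_exp_of_mem_interior_integrableExpSet hv 2).sub
    ((integrable_pow_mul_exp_of_mem_interior_integrableExpSet hv 1).const_mul (2 * c))).add
    (hexp.const_mul (c ^ 2))).congr (ae_of_all _ fun ω => ?_)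
  simp only [Pi.add_apply, Pi.sub_apply, pow_one]
  ring

lemma iteratedDeriv_two_cgf_pos (hv : v ∈ interior (integrableExpSet X μ))
    (hX : ∀ c, ¬X =ᵐ[μ] fun _ => c) : 0 < iteratedDeriv 2 (cgf X μ) v := by
  have hexp : v ∈ integrableExpSet X μ := interior_subset hv
  have hμ : μ ≠ 0 := by
    rintro rfl
    exact hX 0 (by simp [Filter.EventuallyEq])
  set c := deriv (cgf X μ) v
  have hnonneg : 0 ≤ᵐ[μ] fun ω => (X ω - c) ^ 2 * exp (v * X ω) :=
    ae_of_all _ fun ω => by positivity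
  have hne : ∫ ω, (X ω - c) ^ 2 * exp (v * X ω) ∂μ ≠ 0 := by
    rw [Ne, integral_eq_zero_iff_of_nonneg_ae hnonneg
      (integrable_sq_sub_mul_exp_of_mem_interior_integrableExpSet hv c)]
    intro h0
    refine hX c ?_
    filter_upwards [h0] with ω hω
    have hsq := (mul_eq_zero.mp hω).resolve_right (exp_pos _).ne'
    exact sub_eq_zero.mp (pow_eq_zero_iff two_ne_zero |>.mp hsq)
  rw [iteratedDeriv_two_cgf_eq_integral hv]
  exact div_pos ((integral_nonneg_of_ae hnonneg).lt_of_ne' hne) (mgf_pos' hμ hexp)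

lemma strictConvexOn_cgf (hX : ∀ c, ¬X =ᵐ[μ] fun _ => c) :
    StrictConvexOn ℝ (interior (integrableExpSet X μ)) (cgf X μ) :=
  strictConvexOn_of_deriv2_pos' convex_integrableExpSet.interior analyticOn_cgf.continuousOn
    fun _ hv => by simpa only [← iteratedDeriv_eq_iterate] using iteratedDeriv_two_cgf_pos hv hX

end ProbabilityTheory

lemma StrictConvexOn.mul_comp_inv {f : ℝ → ℝ} (hf : StrictConvexOn ℝ (Ioi 0) f) :
    StrictConvexOn ℝ (Ioi 0) fun t => t * f t⁻¹ := by
  refine ⟨convex_Ioi 0, fun x (hx : 0 < x) y (hy : 0 < y) hxy a b ha hb hab => ?_⟩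
  set z := a * x + b * y
  have hz : 0 < z := by positivity
  have key := hf.2 (inv_pos.2 hx) (inv_pos.2 hy) (inv_injective.ne hxy)
    (div_pos (mul_pos ha hx) hz) (div_pos (mul_pos hb hy) hz) (by field_simp; rfl)
  have hcomb : (a * x / z) • x⁻¹ + (b * y / z) • y⁻¹ = z⁻¹ := by
    simp only [smul_eq_mul]
    field_simp
    linarith
  rw [hcomb, smul_eq_mul, smul_eq_mul] at key
  calc (a • x + b • y) * f (a • x + b • y)⁻¹ = z * f z⁻¹ := rfl
    _ < z * (a * x / z * f x⁻¹ + b * y / z * f y⁻¹) := mul_lt_mul_of_pos_left key hz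
    _ = a • (x * f x⁻¹) + b • (y * f y⁻¹) := by simp only [smul_eq_mul]; field_simp

/-- **Strict convexity of the (negated) KL dual objective.** If `0 ≤ Y ≤ M` a.s. and
`Var(Y) > 0`, then `α ↦ α log E[exp(−Y/α)]` is strictly convex on `(0, ∞)`, and hence so is
`α ↦ α log E[exp(−Y/α)] + αδ` for every `δ ≥ 0`. -/
theorem stmt16 {Ω : Type*} [MeasurableSpace Ω] (μ : Measure Ω) [IsProbabilityMeasure μ]
    (Y : Ω → ℝ) (hY : Measurable Y) (M : ℝ) (hbd : ∀ᵐ ω ∂μ, Y ω ∈ Set.Icc 0 M)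
    (hvar : 0 < ProbabilityTheory.variance Y μ) :
    StrictConvexOn ℝ (Set.Ioi (0 : ℝ))
      (fun α : ℝ => α * Real.log (∫ ω, Real.exp (-Y ω / α) ∂μ)) ∧
    ∀ δ : ℝ, 0 ≤ δ → StrictConvexOn ℝ (Set.Ioi (0 : ℝ))
      (fun α : ℝ => α * Real.log (∫ ω, Real.exp (-Y ω / α) ∂μ) + α * δ) := by
  have hdom : integrableExpSet (-Y) μ = univ := by
    refine integrableExpSet_eq_univ_of_mem_Icc (a := -M) (b := 0) hY.neg.aemeasurable ?_
    filter_upwards [hbd] with ω ⟨h0, hM⟩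
    exact ⟨neg_le_neg hM, neg_nonpos.2 h0⟩
  have hcgf : StrictConvexOn ℝ univ (cgf (-Y) μ) := by
    rw [← interior_univ, ← hdom]
    exact strictConvexOn_cgf (not_ae_eq_const_of_variance_pos (by rwa [variance_neg]))
  have hobj : (fun α : ℝ => α * log (∫ ω, exp (-Y ω / α) ∂μ)) = fun α => α * cgf (-Y) μ α⁻¹ := by
    funext α
    simp only [cgf, mgf, Pi.neg_apply, div_eq_inv_mul]
  have hmain := (hcgf.subset (subset_univ _) (convex_Ioi 0)).mul_comp_inv
  rw [← hobj] at hmain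
  exact ⟨hmain, fun δ _ => hmain.add_convexOn ((LinearMap.mulRight ℝ δ).convexOn (convex_Ioi 0))⟩
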